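/- For any λ > 1, there exists a 1-unconditional normalized basis of a Banach space that is (λ, RPGII) but not RPG. -/

import Mathlib

open Finset Filter

noncomputable section

variable {X : Type*} [NormedAddCommGroup X] [NormedSpace ℝ X]

/-- Projection `P_A x = ∑_{n ∈ A} e_n^*(x) e_n`. -/
def proj (f : ℕ → X →L[ℝ] ℝ) (e : ℕ → X) (A : Finset ℕ) (x : X) : X :=
  ∑ n ∈ A, f n x • e n

/-- `Λ` is a greedy set of `x`. -/
def GreedySet (f : ℕ → X →L[ℝ] ℝ) (x : X) (Λ : Finset ℕ) : Prop :=
  ∀ n ∈ Λ, ∀ m, m ∉ Λ → |f m x| ≤ |f n x|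

/-- A (biorthogonal, norm-bounded, fundamental) basis system. -/
structure BasisSystem (f : ℕ → X →L[ℝ] ℝ) (e : ℕ → X) : Prop where
  biorth : ∀ n m, f n (e m) = if n = m then (1 : ℝ) else 0
  dense : Dense (Submodule.span ℝ (Set.range e) : Set X)
  bounded : ∃ c₁ c₂ : ℝ, 0 < c₁ ∧ ∀ n, c₁ ≤ ‖e n‖ ∧ ‖e n‖ ≤ c₂ ∧ ‖f n‖ ≤ c₂

/-- `σ̌^Λ_m(x)`: inf of `‖x - P_I x‖` over `I = ∅` or intervals `I` with
`Λ ≤ max I` and `|I| ≤ m`. -/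
def checkSigma (f : ℕ → X →L[ℝ] ℝ) (e : ℕ → X) (Λ : Finset ℕ) (m : ℕ) (x : X) : ℝ :=
  sInf {r : ℝ | ∃ I : Finset ℕ,
    (I = ∅ ∨ ∃ a b : ℕ, a ≤ b ∧ I = Finset.Icc a b ∧ ∀ n ∈ Λ, n ≤ b) ∧
    I.card ≤ m ∧ r = ‖x - proj f e I x‖}

/-- `σ̂^Λ_m(x)`: inf of `‖x - P_I x‖` over `I = ∅` or intervals `I` with
`min I ≤ Λ` and `|I| ≤ m`. -/
def hatSigma (f : ℕ → X →L[ℝ] ℝ) (e : ℕ → X) (Λ : Finset ℕ) (m : ℕ) (x : X) : ℝ :=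
  sInf {r : ℝ | ∃ I : Finset ℕ,
    (I = ∅ ∨ ∃ a b : ℕ, a ≤ b ∧ I = Finset.Icc a b ∧ ∀ n ∈ Λ, a ≤ n) ∧
    I.card ≤ m ∧ r = ‖x - proj f e I x‖}

/-- `σ̃^{R,Λ}_m(x)`: inf of `‖x - P_A x‖` over `|A| ≤ m`, `A > Λ`. -/
def revSigma (f : ℕ → X →L[ℝ] ℝ) (e : ℕ → X) (Λ : Finset ℕ) (m : ℕ) (x : X) : ℝ :=
  sInf {r : ℝ | ∃ A : Finset ℕ, A.card ≤ m ∧ (∀ n ∈ Λ, ∀ a ∈ A, n < a) ∧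
    r = ‖x - proj f e A x‖}

/-- Reverse partially greedy with constant `C`. -/
def RPG (f : ℕ → X →L[ℝ] ℝ) (e : ℕ → X) (C : ℝ) : Prop :=
  ∀ (x : X) (m : ℕ) (Λ : Finset ℕ), Λ.card = m → GreedySet f x Λ →
    ‖x - proj f e Λ x‖ ≤ C * revSigma f e Λ m x

/-- `(λ, RPGII)` with constant `C`. -/
def RPGII (f : ℕ → X →L[ℝ] ℝ) (e : ℕ → X) (l C : ℝ) : Prop :=
  ∀ (x : X) (m : ℕ) (Λ : Finset ℕ), Λ.card = ⌈l * (m : ℝ)⌉₊ → GreedySet f x Λ →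
    ‖x - proj f e Λ x‖ ≤ C * checkSigma f e Λ m x

/-- Quasi-greedy with constant `C`. -/
def QG (f : ℕ → X →L[ℝ] ℝ) (e : ℕ → X) (C : ℝ) : Prop :=
  ∀ (x : X) (Λ : Finset ℕ), GreedySet f x Λ → ‖proj f e Λ x‖ ≤ C * ‖x‖

/-- Suppression quasi-greedy with constant `C`. -/
def SuppQG (f : ℕ → X →L[ℝ] ℝ) (e : ℕ → X) (C : ℝ) : Prop :=
  ∀ (x : X) (Λ : Finset ℕ), GreedySet f x Λ → ‖x - proj f e Λ x‖ ≤ C * ‖x‖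

/-- Reverse conservative with constant `C`. -/
def RevConservative (e : ℕ → X) (C : ℝ) : Prop :=
  ∀ A B : Finset ℕ, (∀ b ∈ B, ∀ a ∈ A, b < a) → A.card ≤ B.card →
    ‖∑ n ∈ A, e n‖ ≤ C * ‖∑ n ∈ B, e n‖

/-- `s(A) = max A - min A + 1` (and `s(∅) = 0`). -/
def spread (A : Finset ℕ) : ℕ :=
  if h : A.Nonempty then A.max' h - A.min' h + 1 else 0

/-- `(λ, reverse conservative of type II)` with constant `C`. -/
def RevConsII (e : ℕ → X) (l C : ℝ) : Prop :=
  ∀ A B : Finset ℕ, (l - 1) * spread A + (A.card : ℝ) ≤ (B.card : ℝ) →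
    (∀ b ∈ B, ∀ a ∈ A, b < a) → ‖∑ n ∈ A, e n‖ ≤ C * ‖∑ n ∈ B, e n‖

/-- `x` surrounds `A`: `supp x ∩ [min A, max A] = ∅` (vacuous for `A = ∅`). -/
def Surrounds (f : ℕ → X →L[ℝ] ℝ) (x : X) (A : Finset ℕ) : Prop :=
  ∀ a ∈ A, ∀ b ∈ A, ∀ n, a ≤ n → n ≤ b → f n x = 0

/-- `(λ, RPSLC)` with constant `Δ`. -/
def RPSLC (f : ℕ → X →L[ℝ] ℝ) (e : ℕ → X) (l Δ : ℝ) : Prop :=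
  ∀ x : X, (∀ n, |f n x| ≤ 1) →
    ∀ ε δ : ℕ → ℝ, (∀ n, |ε n| = 1) → (∀ n, |δ n| = 1) →
    ∀ A B : Finset ℕ, (l - 1) * spread A + (A.card : ℝ) ≤ (B.card : ℝ) →
    (∀ n ∈ B, f n x = 0) → (∀ b ∈ B, ∀ a ∈ A, b < a) → Surrounds f x A →
    ‖x + ∑ n ∈ A, ε n • e n‖ ≤ Δ * ‖x + ∑ n ∈ B, δ n • e n‖

/-! On the powers of two the basis behaves like the Lorentz sequence space `d(1/√n)`, elsewhere
like `d(1/n)`, whose fundamental function grows like the harmonic numbers.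

For `(λ, RPGII)`, compare a greedy set `Λ` of `x` with an interval `I` of length at most `m`,
where `λ m ≤ |Λ|`. The basis is 1-suppression unconditional and `x - P_Λ x` is a suppression of
`x - P_I x` plus `P_{I \ Λ} x`, so it suffices to bound `‖P_{I \ Λ} x‖`. Let `t` separate the
coefficients of `x` on `Λ \ I` from those on `I \ Λ`. An interval of length `m` contains at most
`log₂ m + 2` powers of two, so `‖P_{I \ Λ} x‖ ≲ t log m`. On the other hand `Λ \ I` carries at
least `(λ - 1) m` coefficients of size at least `t`, so `‖x - P_I x‖ ≳ t log ((λ - 1) m)`.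

RPG implies reverse conservativeness, and reverse conservativeness fails: `4^K` powers of two
placed after an interval of length `4^K` have `‖1_A‖ ≥ 2^K`, while `‖1_B‖ ≤ 4K + 4`. -/

namespace Finset

theorem injOn_count_mem (T : Finset ℕ) : Set.InjOn (Nat.count (· ∈ T)) T :=
  fun _ hm _ hn h => Nat.count_injective hm hn h

theorem image_count_mem (T : Finset ℕ) : T.image (Nat.count (· ∈ T)) = range #T := by
  refine eq_of_subset_of_card_le (fun k hk => ?_) ?_
  · obtain ⟨n, hn, rfl⟩ := mem_image.1 hk
    rw [mem_range, Nat.count_eq_card_filter_range]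
    refine card_lt_card ⟨fun j hj => (mem_filter.1 hj).2, fun hsub => ?_⟩
    simpa using hsub hn
  · rw [card_range, card_image_of_injOn (injOn_count_mem T)]

theorem sum_comp_count_mem {M : Type*} [AddCommMonoid M] (T : Finset ℕ) (g : ℕ → M) :
    ∑ n ∈ T, g (Nat.count (· ∈ T) n) = ∑ k ∈ range #T, g k := by
  rw [← image_count_mem, sum_image (injOn_count_mem T)]

theorem sum_le_sum_range_of_antitone {M : Type*} [AddCommMonoid M] [PartialOrder M]
    [IsOrderedAddMonoid M] {g : ℕ → M} (hg : Antitone g) (T : Finset ℕ) :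
    ∑ j ∈ T, g j ≤ ∑ k ∈ range #T, g k := by
  rw [← sum_comp_count_mem]
  exact sum_le_sum fun _ _ => hg (Nat.count_le _)

end Finset

theorem harmonic_mono : Monotone harmonic := fun _ _ h =>
  sum_le_sum_of_subset_of_nonneg (range_subset_range.2 h) fun _ _ _ => by positivity

theorem harmonic_nonneg (n : ℕ) : 0 ≤ harmonic n :=
  sum_nonneg fun _ _ => by positivity

theorem one_le_harmonic {n : ℕ} (hn : n ≠ 0) : 1 ≤ harmonic n := by
  simpa [harmonic] using harmonic_mono (Nat.one_le_iff_ne_zero.2 hn)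

theorem sum_range_inv_add_one_eq_harmonic (d : ℕ) :
    ∑ k ∈ range d, ((k : ℝ) + 1)⁻¹ = harmonic d := by
  simp [harmonic]

theorem sum_inv_add_one_le_harmonic {T : Finset ℕ} {π : ℕ → ℕ} (hπ : Set.InjOn π T) :
    ∑ n ∈ T, ((π n : ℝ) + 1)⁻¹ ≤ harmonic #T := by
  rw [← sum_image (f := fun j : ℕ => ((j : ℝ) + 1)⁻¹) hπ, ← card_image_of_injOn hπ,
    ← sum_range_inv_add_one_eq_harmonic]
  exact sum_le_sum_range_of_antitone (fun a b h => by gcongr) _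

theorem harmonic_le_log_two_add_two (n : ℕ) : (harmonic n : ℝ) ≤ Nat.log 2 n + 2 := by
  rcases eq_or_ne n 0 with rfl | hn
  · simp
  have hlog : Real.log n ≤ (Nat.log 2 n + 1) * Real.log 2 := by
    calc Real.log n ≤ Real.log (2 ^ (Nat.log 2 n + 1)) :=
          Real.log_le_log (by positivity)
            (by exact_mod_cast (Nat.lt_pow_succ_log_self one_lt_two n).le)
      _ = (Nat.log 2 n + 1) * Real.log 2 := by rw [Real.log_pow]; push_cast; ring
  have : (Nat.log 2 n + 1) * Real.log 2 ≤ Nat.log 2 n + 1 :=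
    mul_le_of_le_one_right (by positivity) (by linarith [Real.log_two_lt_d9])
  linarith [harmonic_le_one_add_log n]

theorem log_two_le_two_mul_harmonic (n : ℕ) : (Nat.log 2 n : ℝ) ≤ 2 * harmonic n := by
  rcases eq_or_ne n 0 with rfl | hn
  · simp
  have hlog : Nat.log 2 n * Real.log 2 ≤ Real.log (n + 1 : ℕ) := by
    rw [← Real.log_pow]
    exact Real.log_le_log (by positivity)
      (by exact_mod_cast (Nat.pow_log_le_self 2 hn).trans n.le_succ)
  nlinarith [log_add_one_le_harmonic n, Real.log_two_gt_d9, (Nat.log 2 n).cast_nonneg (α := ℝ)]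

theorem log_two_add_two_le_mul_harmonic {m d k : ℕ} (hd : d ≠ 0) (hm : m ≤ 2 ^ k * d) :
    (Nat.log 2 m : ℝ) + 2 ≤ (k + 4) * harmonic d := by
  have hlog : Nat.log 2 m ≤ k + Nat.log 2 d := by
    refine Nat.lt_succ_iff.1 (Nat.log_lt_of_lt_pow' (by omega) ?_)
    calc m ≤ 2 ^ k * d := hm
      _ < 2 ^ k * 2 ^ (Nat.log 2 d).succ :=
          Nat.mul_lt_mul_of_pos_left (Nat.lt_pow_succ_log_self one_lt_two d) (by positivity)
      _ = 2 ^ (k + Nat.log 2 d).succ := by rw [← pow_add]; rfl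
  have h1 : (1 : ℝ) ≤ harmonic d := by exact_mod_cast one_le_harmonic hd
  have h2 := log_two_le_two_mul_harmonic d
  have h3 : (k : ℝ) ≤ k * harmonic d := le_mul_of_one_le_right (by positivity) h1
  have : (Nat.log 2 m : ℝ) ≤ k + Nat.log 2 d := by exact_mod_cast hlog
  nlinarith

theorem exists_mul_lt_two_pow (C : ℝ) : ∃ K : ℕ, C * (4 * K + 4) < 2 ^ K := by
  have hlim : Tendsto (fun K : ℕ => 4 * C * ((K : ℝ) ^ 1 / 2 ^ K + (K : ℝ) ^ 0 / 2 ^ K))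
      atTop (nhds (4 * C * (0 + 0))) :=
    ((tendsto_pow_const_div_const_pow_of_one_lt 1 one_lt_two).add
      (tendsto_pow_const_div_const_pow_of_one_lt 0 one_lt_two)).const_mul (4 * C)
  rw [add_zero, mul_zero] at hlim
  obtain ⟨K, hK⟩ := (hlim.eventually (gt_mem_nhds one_pos)).exists
  refine ⟨K, ?_⟩
  rw [pow_one, pow_zero, ← add_div, ← mul_div_assoc, div_lt_one (by positivity)] at hK
  linarith

theorem le_two_pow_mul_card_sdiff {l : ℝ} {k m : ℕ} {Λ I : Finset ℕ} (hl : 1 < l)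
    (hk : (l - 1)⁻¹ ≤ 2 ^ k) (hI : #I ≤ m) (hΛ : l * m ≤ #Λ) : m ≤ 2 ^ k * #(Λ \ I) := by
  have h1 : (#Λ : ℝ) ≤ #(Λ \ I) + m := by
    exact_mod_cast card_le_card_sdiff_add_card.trans (Nat.add_le_add_left hI _)
  have h2 : (l - 1) * m ≤ #(Λ \ I) := by linarith
  have : (m : ℝ) ≤ 2 ^ k * #(Λ \ I) :=
    calc (m : ℝ) = (l - 1)⁻¹ * ((l - 1) * m) := by
          rw [← mul_assoc, inv_mul_cancel₀ (by linarith), one_mul]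
      _ ≤ 2 ^ k * #(Λ \ I) := mul_le_mul hk h2 (by nlinarith [m.cast_nonneg (α := ℝ)])
          (by positivity)
  exact_mod_cast this

section Biorthogonal

variable {f : ℕ → X →L[ℝ] ℝ} {e : ℕ → X}

theorem continuous_proj (f : ℕ → X →L[ℝ] ℝ) (e : ℕ → X) (A : Finset ℕ) :
    Continuous (proj f e A) :=
  continuous_finsetSum _ fun n _ => (f n).continuous.smul continuous_const

theorem GreedySet.exists_threshold {x : X} {Λ : Finset ℕ} (hΛ : GreedySet f x Λ)
    (G : Finset ℕ) (hG : Disjoint G Λ) :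
    ∃ t : ℝ, 0 ≤ t ∧ (∀ n ∈ G, |f n x| ≤ t) ∧ ∀ n ∈ Λ, t ≤ |f n x| := by
  have habs (n : ℕ) : (‖f n x‖₊ : ℝ) = |f n x| := by simp
  refine ⟨(G.sup fun n => ‖f n x‖₊ : NNReal), NNReal.coe_nonneg _, fun n hn => ?_,
    fun n hn => ?_⟩
  · rw [← habs]
    exact_mod_cast le_sup (f := fun n => ‖f n x‖₊) hn
  · rw [← habs, NNReal.coe_le_coe]
    refine Finset.sup_le fun g hg => ?_
    rw [← NNReal.coe_le_coe, habs, habs]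
    exact hΛ n hn g (disjoint_left.1 hG hg)

variable (hfe : ∀ n m, f n (e m) = if n = m then (1 : ℝ) else 0)
include hfe

theorem apply_proj (A : Finset ℕ) (x : X) (n : ℕ) :
    f n (proj f e A x) = if n ∈ A then f n x else 0 := by
  simp [proj, hfe]

theorem proj_sub_proj_of_disjoint {A I : Finset ℕ} (h : Disjoint A I) (x : X) :
    proj f e A (x - proj f e I x) = proj f e A x :=
  sum_congr rfl fun n hn => by
    rw [map_sub, apply_proj hfe, if_neg (disjoint_left.1 h hn), sub_zero]

theorem sub_proj_eq (Λ I : Finset ℕ) (x : X) :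
    x - proj f e Λ x = ((x - proj f e I x) - proj f e (Λ \ I) (x - proj f e I x))
      + proj f e (I \ Λ) x := by
  rw [proj_sub_proj_of_disjoint hfe sdiff_disjoint]
  have : proj f e Λ x - proj f e I x = proj f e (Λ \ I) x - proj f e (I \ Λ) x :=
    sum_sdiff_sub_sum_sdiff.symm
  rw [show proj f e Λ x = proj f e I x + (proj f e Λ x - proj f e I x) by abel, this]
  abel

theorem RPG.revConservative {C : ℝ} (hC : RPG f e C) (hC0 : 0 ≤ C) : RevConservative e C := by
  intro A B hBA hcard
  have hdisj : Disjoint B A := disjoint_left.2 fun b hb hbA => (hBA b hb b hbA).false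
  set x := ∑ n ∈ B ∪ A, e n
  have hx (n : ℕ) : f n x = if n ∈ B ∪ A then 1 else 0 := by simp [x, hfe]
  have hproj {S : Finset ℕ} (hS : S ⊆ B ∪ A) : proj f e S x = ∑ n ∈ S, e n :=
    sum_congr rfl fun n hn => by rw [hx, if_pos (hS hn), one_smul]
  have hsplit : x = ∑ n ∈ B, e n + ∑ n ∈ A, e n := sum_union hdisj
  have hxB : x - proj f e B x = ∑ n ∈ A, e n := by
    rw [hproj subset_union_left, hsplit, add_sub_cancel_left]
  have hxA : x - proj f e A x = ∑ n ∈ B, e n := by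
    rw [hproj subset_union_right, hsplit, add_sub_cancel_right]
  have hgreedy : GreedySet f x B := fun n hn m _ => by
    rw [hx, hx, if_pos (mem_union_left _ hn)]
    split_ifs <;> simp
  have hrev : revSigma f e B #B x ≤ ‖∑ n ∈ B, e n‖ :=
    csInf_le ⟨0, by rintro _ ⟨_, _, _, rfl⟩; exact norm_nonneg _⟩ ⟨A, hcard, hBA, hxA.symm ▸ rfl⟩
  calc ‖∑ n ∈ A, e n‖ = ‖x - proj f e B x‖ := by rw [hxB]
    _ ≤ C * revSigma f e B #B x := hC x #B B rfl hgreedy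
    _ ≤ C * ‖∑ n ∈ B, e n‖ := mul_le_mul_of_nonneg_left hrev hC0

end Biorthogonal

namespace MixedLorentz

def IsPowTwo (n : ℕ) : Prop := ∃ k, n = 2 ^ k

instance : DecidablePred IsPowTwo := fun n =>
  decidable_of_iff (n = 2 ^ Nat.log 2 n)
    ⟨fun h => ⟨_, h⟩, by rintro ⟨k, rfl⟩; rw [Nat.log_pow one_lt_two]⟩

theorem card_isPowTwo_Icc_le {a b m : ℕ} (h : #(Icc a b) ≤ m) :
    #{n ∈ Icc a b | IsPowTwo n} ≤ Nat.log 2 m + 2 := by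
  set P := {n ∈ Icc a b | IsPowTwo n}
  have hsmall : #{n ∈ P | n < m} ≤ Nat.log 2 m + 1 := by
    refine (card_le_card (t := (range (Nat.log 2 m + 1)).image (2 ^ ·)) fun n hn => ?_).trans
      (card_image_le.trans (card_range _).le)
    obtain ⟨hP, hnm⟩ := mem_filter.1 hn
    obtain ⟨k, rfl⟩ := (mem_filter.1 hP).2
    exact mem_image.2
      ⟨k, mem_range.2 (Nat.lt_succ_of_le (Nat.le_log_of_pow_le one_lt_two hnm.le)), rfl⟩
  have hlarge : #{n ∈ P | ¬ n < m} ≤ 1 := by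
    rw [Nat.card_Icc] at h
    have key (i j : ℕ) (hi : a ≤ 2 ^ i) (hj : 2 ^ j ≤ b) (him : m ≤ 2 ^ i) : ¬ i < j := by
      intro hij
      have := Nat.pow_le_pow_right two_pos hij
      rw [pow_succ] at this
      omega
    refine card_le_one.2 fun x hx y hy => ?_
    simp only [P, mem_filter, mem_Icc, not_lt] at hx hy
    obtain ⟨⟨⟨hax, hxb⟩, i, rfl⟩, hxm⟩ := hx
    obtain ⟨⟨⟨hay, hyb⟩, j, rfl⟩, hym⟩ := hy
    rw [le_antisymm (not_lt.1 (key j i hay hxb hym)) (not_lt.1 (key i j hax hyb hxm))]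
  have := card_filter_add_card_filter_not (s := P) (· < m)
  omega

def weight (n k : ℕ) : ℝ :=
  if IsPowTwo n then (√((k : ℝ) + 1))⁻¹ else ((k : ℝ) + 1)⁻¹

theorem weight_nonneg (n k : ℕ) : 0 ≤ weight n k := by
  unfold weight; split_ifs <;> positivity

theorem weight_zero (n : ℕ) : weight n 0 = 1 := by
  simp [weight]

theorem inv_add_one_le_weight (n k : ℕ) : ((k : ℝ) + 1)⁻¹ ≤ weight n k := by
  unfold weight
  split_ifs
  · exact inv_anti₀ (by positivity) (Real.sqrt_le_self_iff.2 (Or.inr (by simp)))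
  · rfl

theorem weight_le_one (n k : ℕ) : weight n k ≤ 1 := by
  unfold weight
  split_ifs <;> exact inv_le_one_of_one_le₀ (by simp)

theorem weight_le (n k : ℕ) :
    weight n k ≤ (if IsPowTwo n then 1 else 0) + ((k : ℝ) + 1)⁻¹ := by
  by_cases h : IsPowTwo n
  · rw [if_pos h]
    exact le_add_of_le_of_nonneg (weight_le_one n k) (by positivity)
  · rw [weight, if_neg h, if_neg h, zero_add]

theorem sqrt_le_sum_range_inv_sqrt (d : ℕ) : √d ≤ ∑ k ∈ range d, (√((k : ℝ) + 1))⁻¹ :=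
  calc √(d : ℝ) = ∑ _k ∈ range d, (√(d : ℝ))⁻¹ := by
        rw [sum_const, card_range, nsmul_eq_mul, ← div_eq_mul_inv, Real.div_sqrt]
    _ ≤ ∑ k ∈ range d, (√((k : ℝ) + 1))⁻¹ := sum_le_sum fun k hk => by
        have : (k : ℝ) + 1 ≤ d := by exact_mod_cast mem_range.1 hk
        gcongr

/-- The paper's norm takes separate injections on the powers of two and on the other indices;
a single injection `π` gives an equivalent norm (within a factor `2`). -/
def admissibleSums (v : ℕ →₀ ℝ) : Set ℝ :=
  {r | ∃ (S : Finset ℕ) (π : ℕ → ℕ), Set.InjOn π S ∧ r = ∑ n ∈ S, |v n| * weight n (π n)}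

theorem sum_le_sum_support (v : ℕ →₀ ℝ) (S : Finset ℕ) (π : ℕ → ℕ) :
    ∑ n ∈ S, |v n| * weight n (π n) ≤ ∑ n ∈ v.support, |v n| := by
  calc ∑ n ∈ S, |v n| * weight n (π n) ≤ ∑ n ∈ S, |v n| :=
        sum_le_sum fun n _ => mul_le_of_le_one_right (abs_nonneg _) (weight_le_one _ _)
    _ ≤ ∑ n ∈ S ∪ v.support, |v n| :=
        sum_le_sum_of_subset_of_nonneg subset_union_left fun _ _ _ => abs_nonneg _
    _ = ∑ n ∈ v.support, |v n| :=
        (sum_subset subset_union_right fun n _ hn => by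
          simp [Finsupp.notMem_support_iff.1 hn]).symm

def lorentzNorm (v : ℕ →₀ ℝ) : ℝ := sSup (admissibleSums v)

theorem sum_le_lorentzNorm (v : ℕ →₀ ℝ) {S : Finset ℕ} {π : ℕ → ℕ} (hπ : Set.InjOn π S) :
    ∑ n ∈ S, |v n| * weight n (π n) ≤ lorentzNorm v :=
  le_csSup ⟨_, by rintro _ ⟨S, π, -, rfl⟩; exact sum_le_sum_support v S π⟩ ⟨S, π, hπ, rfl⟩

theorem lorentzNorm_le {v : ℕ →₀ ℝ} {b : ℝ} (hb : 0 ≤ b)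
    (h : ∀ (S : Finset ℕ) (π : ℕ → ℕ), Set.InjOn π S → ∑ n ∈ S, |v n| * weight n (π n) ≤ b) :
    lorentzNorm v ≤ b :=
  Real.sSup_le (by rintro _ ⟨S, π, hπ, rfl⟩; exact h S π hπ) hb

theorem abs_le_lorentzNorm (v : ℕ →₀ ℝ) (n : ℕ) : |v n| ≤ lorentzNorm v := by
  simpa [weight_zero] using sum_le_lorentzNorm v (S := {n}) (π := fun _ => 0) (by simp)

theorem lorentzNorm_nonneg (v : ℕ →₀ ℝ) : 0 ≤ lorentzNorm v :=
  (abs_nonneg _).trans (abs_le_lorentzNorm v 0)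

theorem lorentzNorm_mono {v w : ℕ →₀ ℝ} (h : ∀ n, |v n| ≤ |w n|) :
    lorentzNorm v ≤ lorentzNorm w :=
  lorentzNorm_le (lorentzNorm_nonneg w) fun _ _ hπ => (sum_le_sum fun n _ =>
    mul_le_mul_of_nonneg_right (h n) (weight_nonneg _ _)).trans (sum_le_lorentzNorm w hπ)

def lorentzAddGroupNorm : AddGroupNorm (ℕ →₀ ℝ) where
  toFun := lorentzNorm
  map_zero' := le_antisymm (lorentzNorm_le le_rfl fun _ _ _ => by simp) (lorentzNorm_nonneg 0)
  add_le' v w := lorentzNorm_le (add_nonneg (lorentzNorm_nonneg v) (lorentzNorm_nonneg w))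
    fun S π hπ => calc
      ∑ n ∈ S, |(v + w) n| * weight n (π n)
          ≤ ∑ n ∈ S, (|v n| * weight n (π n) + |w n| * weight n (π n)) :=
        sum_le_sum fun n _ => by
          rw [← add_mul]
          exact mul_le_mul_of_nonneg_right (abs_add_le _ _) (weight_nonneg _ _)
      _ ≤ lorentzNorm v + lorentzNorm w := by
        rw [sum_add_distrib]
        exact add_le_add (sum_le_lorentzNorm v hπ) (sum_le_lorentzNorm w hπ)
  neg' v := by simp only [lorentzNorm, admissibleSums, Finsupp.coe_neg, Pi.neg_apply, abs_neg]
  eq_zero_of_map_eq_zero' v hv :=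
    Finsupp.ext fun n => abs_nonpos_iff.1 ((abs_le_lorentzNorm v n).trans_eq hv)

instance : NormedAddCommGroup (ℕ →₀ ℝ) := lorentzAddGroupNorm.toNormedAddCommGroup

theorem norm_def (v : ℕ →₀ ℝ) : ‖v‖ = lorentzNorm v := rfl

instance : NormedSpace ℝ (ℕ →₀ ℝ) where
  norm_smul_le c v := lorentzNorm_le (by positivity) fun S π hπ => by
    simp_rw [Finsupp.smul_apply, smul_eq_mul, abs_mul, mul_assoc, ← mul_sum]
    exact mul_le_mul_of_nonneg_left (sum_le_lorentzNorm v hπ) (abs_nonneg c)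

theorem norm_le_of_abs_le {v : ℕ →₀ ℝ} {A : Finset ℕ} {t : ℝ} (hv : v.support ⊆ A)
    (ht0 : 0 ≤ t) (ht : ∀ n ∈ A, |v n| ≤ t) :
    ‖v‖ ≤ t * (#{n ∈ A | IsPowTwo n} + harmonic #A) := by
  have hH : (0 : ℝ) ≤ harmonic #A := by exact_mod_cast harmonic_nonneg _
  refine lorentzNorm_le (by positivity) fun S π hπ => ?_
  have hπ' : Set.InjOn π (S ∩ A : Finset ℕ) := hπ.mono (by simp)
  calc ∑ n ∈ S, |v n| * weight n (π n) = ∑ n ∈ S ∩ A, |v n| * weight n (π n) :=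
        (sum_subset inter_subset_left fun n hS hn => by
          simp [Finsupp.notMem_support_iff.1 fun h => hn (mem_inter.2 ⟨hS, hv h⟩)]).symm
    _ ≤ ∑ n ∈ S ∩ A, t * ((if IsPowTwo n then 1 else 0) + ((π n : ℝ) + 1)⁻¹) :=
        sum_le_sum fun n hn =>
          mul_le_mul (ht n (mem_inter.1 hn).2) (weight_le _ _) (weight_nonneg _ _) ht0
    _ = t * (#{n ∈ S ∩ A | IsPowTwo n} + ∑ n ∈ S ∩ A, ((π n : ℝ) + 1)⁻¹) := by
        rw [← mul_sum, sum_add_distrib, sum_boole]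
    _ ≤ t * (#{n ∈ A | IsPowTwo n} + harmonic #A) := by
        gcongr
        · exact inter_subset_right
        · exact (sum_inv_add_one_le_harmonic hπ').trans
            (by exact_mod_cast harmonic_mono (card_le_card inter_subset_right))

theorem mul_harmonic_le_norm {v : ℕ →₀ ℝ} {A : Finset ℕ} {t : ℝ} (ht : ∀ n ∈ A, t ≤ |v n|) :
    t * harmonic #A ≤ ‖v‖ :=
  calc t * harmonic #A = ∑ n ∈ A, t * ((Nat.count (· ∈ A) n : ℝ) + 1)⁻¹ := by
        rw [← mul_sum, sum_comp_count_mem A (fun k => ((k : ℝ) + 1)⁻¹),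
          sum_range_inv_add_one_eq_harmonic]
    _ ≤ ∑ n ∈ A, |v n| * weight n (Nat.count (· ∈ A) n) := sum_le_sum fun n hn =>
        mul_le_mul (ht n hn) (inv_add_one_le_weight _ _) (by positivity) (abs_nonneg _)
    _ ≤ ‖v‖ := sum_le_lorentzNorm v (injOn_count_mem A)

theorem mul_sqrt_le_norm {v : ℕ →₀ ℝ} {A : Finset ℕ} {t : ℝ} (ht0 : 0 ≤ t)
    (hA : ∀ n ∈ A, IsPowTwo n) (ht : ∀ n ∈ A, t ≤ |v n|) : t * √(#A : ℝ) ≤ ‖v‖ :=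
  calc t * √(#A : ℝ) ≤ t * ∑ k ∈ range #A, (√((k : ℝ) + 1))⁻¹ :=
        mul_le_mul_of_nonneg_left (sqrt_le_sum_range_inv_sqrt _) ht0
    _ = ∑ n ∈ A, t * weight n (Nat.count (· ∈ A) n) := by
        rw [mul_sum, ← sum_comp_count_mem A]
        exact sum_congr rfl fun n hn => by rw [weight, if_pos (hA n hn)]
    _ ≤ ∑ n ∈ A, |v n| * weight n (Nat.count (· ∈ A) n) := sum_le_sum fun n hn =>
        mul_le_mul_of_nonneg_right (ht n hn) (weight_nonneg _ _)
    _ ≤ ‖v‖ := sum_le_lorentzNorm v (injOn_count_mem A)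

theorem norm_le_of_subset_Icc {v : ℕ →₀ ℝ} {A : Finset ℕ} {a b m : ℕ} {t : ℝ}
    (hv : v.support ⊆ A) (hA : A ⊆ Icc a b) (hm : #(Icc a b) ≤ m) (ht0 : 0 ≤ t)
    (ht : ∀ n ∈ A, |v n| ≤ t) : ‖v‖ ≤ 2 * t * (Nat.log 2 m + 2) := by
  have hpow : (#{n ∈ A | IsPowTwo n} : ℝ) ≤ Nat.log 2 m + 2 := by
    exact_mod_cast (card_le_card (filter_subset_filter _ hA)).trans (card_isPowTwo_Icc_le hm)
  have hharm : (harmonic #A : ℝ) ≤ Nat.log 2 m + 2 := by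
    refine le_trans ?_ (harmonic_le_log_two_add_two m)
    exact_mod_cast harmonic_mono ((card_le_card hA).trans hm)
  calc ‖v‖ ≤ t * (#{n ∈ A | IsPowTwo n} + harmonic #A) := norm_le_of_abs_le hv ht0 ht
    _ ≤ t * ((Nat.log 2 m + 2) + (Nat.log 2 m + 2)) := by gcongr
    _ = 2 * t * (Nat.log 2 m + 2) := by ring

abbrev Space : Type := UniformSpace.Completion (ℕ →₀ ℝ)

def unitVec (n : ℕ) : Space := (Finsupp.single n 1 : ℕ →₀ ℝ)

def coord (n : ℕ) : Space →L[ℝ] ℝ :=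
  (LinearMap.mkContinuous (Finsupp.lapply n) 1 fun v => by
    simpa [norm_def] using abs_le_lorentzNorm v n).extend UniformSpace.Completion.toComplL

theorem coord_coe (n : ℕ) (v : ℕ →₀ ℝ) : coord n v = v n := by
  refine ContinuousLinearMap.extend_eq _ ?_ ?_ v
  · simpa using UniformSpace.Completion.denseRange_coe
  · simpa using UniformSpace.Completion.isUniformInducing_coe _

theorem coord_unitVec (n m : ℕ) : coord n (unitVec m) = if n = m then 1 else 0 := by
  simp [unitVec, coord_coe, Finsupp.single_apply, eq_comm]

theorem norm_coord_le (n : ℕ) : ‖coord n‖ ≤ 1 := by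
  refine ContinuousLinearMap.opNorm_le_bound _ zero_le_one fun x => ?_
  induction x using UniformSpace.Completion.induction_on with
  | hp => exact isClosed_le (coord n).continuous.norm (continuous_const.mul continuous_norm)
  | ih v => simpa [coord_coe, norm_def] using abs_le_lorentzNorm v n

theorem norm_unitVec (n : ℕ) : ‖unitVec n‖ = 1 := by
  rw [unitVec, UniformSpace.Completion.norm_coe, norm_def]
  refine le_antisymm (lorentzNorm_le zero_le_one fun S π _ => ?_) ?_
  · simpa using sum_le_sum_support (Finsupp.single n (1 : ℝ)) S π
  · simpa using abs_le_lorentzNorm (Finsupp.single n (1 : ℝ)) n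

def vecOn (A : Finset ℕ) (c : ℕ → ℝ) : ℕ →₀ ℝ := ∑ n ∈ A, Finsupp.single n (c n)

theorem vecOn_apply (A : Finset ℕ) (c : ℕ → ℝ) (j : ℕ) :
    vecOn A c j = if j ∈ A then c j else 0 := by
  simp [vecOn, Finsupp.finsetSum_apply, Finsupp.single_apply]

theorem support_vecOn_subset (A : Finset ℕ) (c : ℕ → ℝ) : (vecOn A c).support ⊆ A :=
  fun j hj => by_contra fun hjA => Finsupp.mem_support_iff.1 hj (by rw [vecOn_apply, if_neg hjA])

theorem sum_smul_unitVec (A : Finset ℕ) (c : ℕ → ℝ) :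
    ∑ n ∈ A, c n • unitVec n = (vecOn A c : Space) := by
  rw [vecOn, ← UniformSpace.Completion.toCompl_apply, map_sum]
  refine sum_congr rfl fun n _ => ?_
  rw [unitVec, ← UniformSpace.Completion.coe_smul, Finsupp.smul_single_one]
  rfl

theorem proj_eq_coe (A : Finset ℕ) (x : Space) :
    proj coord unitVec A x = (vecOn A (coord · x) : Space) :=
  sum_smul_unitVec A _

theorem norm_proj_le (A : Finset ℕ) (x : Space) : ‖proj coord unitVec A x‖ ≤ ‖x‖ := by
  induction x using UniformSpace.Completion.induction_on with
  | hp => exact isClosed_le (continuous_proj _ _ A).norm continuous_norm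
  | ih v =>
    rw [proj_eq_coe, UniformSpace.Completion.norm_coe, UniformSpace.Completion.norm_coe]
    refine lorentzNorm_mono fun n => ?_
    rw [vecOn_apply, coord_coe]
    split_ifs <;> simp

theorem norm_sub_proj_le (A : Finset ℕ) (x : Space) : ‖x - proj coord unitVec A x‖ ≤ ‖x‖ := by
  induction x using UniformSpace.Completion.induction_on with
  | hp => exact isClosed_le (continuous_id.sub (continuous_proj _ _ A)).norm continuous_norm
  | ih v =>
    rw [proj_eq_coe, ← UniformSpace.Completion.coe_sub, UniformSpace.Completion.norm_coe,
      UniformSpace.Completion.norm_coe]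
    refine lorentzNorm_mono fun n => ?_
    rw [Finsupp.sub_apply, vecOn_apply, coord_coe]
    split_ifs <;> simp

theorem norm_sum_smul_unitVec_le {a ε : ℕ → ℝ} {S : Finset ℕ} (hε : ∀ n, |ε n| = 1) :
    ‖∑ n ∈ S, (ε n * a n) • unitVec n‖ ≤ ‖∑ n ∈ S, a n • unitVec n‖ := by
  rw [sum_smul_unitVec, sum_smul_unitVec, UniformSpace.Completion.norm_coe,
    UniformSpace.Completion.norm_coe]
  refine lorentzNorm_mono fun n => ?_
  rw [vecOn_apply, vecOn_apply]
  split_ifs <;> simp [abs_mul, hε]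

theorem dense_span_unitVec : Dense (Submodule.span ℝ (Set.range unitVec) : Set Space) := by
  refine UniformSpace.Completion.denseRange_coe.mono ?_
  rintro _ ⟨v, rfl⟩
  have hv : (v : Space) = ∑ n ∈ v.support, v n • unitVec n := by
    rw [sum_smul_unitVec, vecOn, ← Finsupp.sum, Finsupp.sum_single]
  rw [hv]
  exact Submodule.sum_mem _ fun n _ => Submodule.smul_mem _ _ (Submodule.subset_span ⟨n, rfl⟩)

theorem basisSystem : BasisSystem coord unitVec :=
  ⟨coord_unitVec, dense_span_unitVec, 1, 1, one_pos,
    fun n => ⟨(norm_unitVec n).ge, (norm_unitVec n).le, norm_coord_le n⟩⟩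

theorem norm_sub_proj_le_of_greedySet {l : ℝ} {k : ℕ} (hl : 1 < l) (hk : (l - 1)⁻¹ ≤ 2 ^ k)
    {x : Space} {Λ : Finset ℕ} (hΛ : GreedySet coord x Λ) {a b m : ℕ} (hm : #(Icc a b) ≤ m)
    (hcard : l * m ≤ #Λ) :
    ‖x - proj coord unitVec Λ x‖ ≤ (2 * k + 9) * ‖x - proj coord unitVec (Icc a b) x‖ := by
  set I := Icc a b
  set y := x - proj coord unitVec I x
  have hsplit : ‖x - proj coord unitVec Λ x‖ ≤ ‖y‖ + ‖proj coord unitVec (I \ Λ) x‖ := by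
    rw [sub_proj_eq coord_unitVec Λ I x]
    exact (norm_add_le _ _).trans (add_le_add_left (norm_sub_proj_le _ y) _)
  rcases (I \ Λ).eq_empty_or_nonempty with hG | ⟨g, hg⟩
  · rw [hG, show proj coord unitVec ∅ x = 0 from sum_empty, norm_zero, add_zero] at hsplit
    nlinarith [norm_nonneg y, k.cast_nonneg (α := ℝ)]
  obtain ⟨t, ht0, htG, htF⟩ := hΛ.exists_threshold (I \ Λ) sdiff_disjoint
  have hF := le_two_pow_mul_card_sdiff hl hk hm hcard
  have hF0 : #(Λ \ I) ≠ 0 := fun h => by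
    have := (card_pos.2 ⟨g, (mem_sdiff.1 hg).1⟩).trans_le hm
    rw [h, mul_zero] at hF
    omega
  have hPG : ‖proj coord unitVec (I \ Λ) x‖ ≤ 2 * t * (Nat.log 2 m + 2) := by
    rw [proj_eq_coe, UniformSpace.Completion.norm_coe]
    refine norm_le_of_subset_Icc (support_vecOn_subset _ _) sdiff_subset hm ht0 fun n hn => ?_
    rw [vecOn_apply, if_pos hn]
    exact htG n hn
  have hy : t * harmonic #(Λ \ I) ≤ ‖y‖ := by
    refine le_trans ?_ (norm_proj_le (Λ \ I) y)
    rw [proj_eq_coe, UniformSpace.Completion.norm_coe]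
    refine mul_harmonic_le_norm fun n hn => ?_
    rw [vecOn_apply, if_pos hn, map_sub, apply_proj coord_unitVec, if_neg (mem_sdiff.1 hn).2,
      sub_zero]
    exact htF n (mem_sdiff.1 hn).1
  have hnum := log_two_add_two_le_mul_harmonic hF0 hF
  calc ‖x - proj coord unitVec Λ x‖ ≤ ‖y‖ + 2 * (t * (Nat.log 2 m + 2)) := by linarith
    _ ≤ ‖y‖ + 2 * (t * ((k + 4) * harmonic #(Λ \ I))) := by gcongr
    _ = ‖y‖ + 2 * (k + 4) * (t * harmonic #(Λ \ I)) := by ring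
    _ ≤ ‖y‖ + 2 * (k + 4) * ‖y‖ := by gcongr
    _ = (2 * k + 9) * ‖y‖ := by ring

theorem rpgII {l : ℝ} (hl : 1 < l) : ∃ C : ℝ, 1 ≤ C ∧ RPGII coord unitVec l C := by
  obtain ⟨k, hk⟩ := pow_unbounded_of_one_lt (l - 1)⁻¹ (one_lt_two (α := ℝ))
  have hC : (0 : ℝ) < 2 * k + 9 := by positivity
  refine ⟨2 * k + 9, by linarith [k.cast_nonneg (α := ℝ)], fun x m Λ hcard hΛ => ?_⟩
  rw [mul_comm, ← div_le_iff₀ hC]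
  refine le_csInf ⟨_, ∅, Or.inl rfl, by simp, rfl⟩ ?_
  rintro _ ⟨I, hI, hIm, rfl⟩
  obtain ⟨a, b, rfl⟩ : ∃ a b, I = Icc a b := by
    rcases hI with rfl | ⟨a, b, -, rfl, -⟩
    exacts [⟨1, 0, by simp⟩, ⟨a, b, rfl⟩]
  rw [div_le_iff₀' hC]
  exact norm_sub_proj_le_of_greedySet hl hk.le hΛ hIm (hcard ▸ Nat.le_ceil _)

theorem not_revConservative (C : ℝ) : ¬ RevConservative unitVec C := by
  intro hC
  obtain ⟨K, hK⟩ := exists_mul_lt_two_pow C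
  set d := 4 ^ K
  set A := (Ico d (2 * d)).image (2 ^ ·)
  have hA : #A = d := by
    rw [card_image_of_injective _ (Nat.pow_right_injective le_rfl), Nat.card_Ico]
    omega
  have hB : #(Icc 1 d) = d := by simp
  have hBA : ∀ b ∈ Icc 1 d, ∀ a ∈ A, b < a := fun b hb a ha => by
    obtain ⟨i, hi, rfl⟩ := mem_image.1 ha
    exact (mem_Icc.1 hb).2.trans_lt
      (Nat.lt_two_pow_self.trans_le (Nat.pow_le_pow_right two_pos (mem_Ico.1 hi).1))
  have hsum (S : Finset ℕ) : ∑ n ∈ S, unitVec n = (vecOn S 1 : Space) := by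
    rw [← sum_smul_unitVec]
    simp
  have hlow : (2 : ℝ) ^ K ≤ ‖∑ n ∈ A, unitVec n‖ := by
    rw [hsum, UniformSpace.Completion.norm_coe]
    have := mul_sqrt_le_norm (v := vecOn A 1) (A := A) zero_le_one
      (fun n hn => by obtain ⟨i, -, rfl⟩ := mem_image.1 hn; exact ⟨i, rfl⟩)
      (fun n hn => by simp [vecOn_apply, hn])
    have hd : ((4 ^ K : ℕ) : ℝ) = (2 ^ K) ^ 2 := by
      push_cast
      rw [← pow_mul, mul_comm, pow_mul]
      norm_num
    rwa [one_mul, hA, hd, Real.sqrt_sq (by positivity)] at this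
  have hup : ‖∑ n ∈ Icc 1 d, unitVec n‖ ≤ 4 * K + 4 := by
    rw [hsum, UniformSpace.Completion.norm_coe]
    refine (norm_le_of_subset_Icc (support_vecOn_subset _ _) subset_rfl hB.le zero_le_one
      fun n hn => by simp [vecOn_apply, hn]).trans_eq ?_
    rw [show d = 2 ^ (2 * K) by rw [pow_mul]; rfl, Nat.log_pow one_lt_two]
    push_cast
    ring
  have := hC A (Icc 1 d) hBA (hA.trans hB.symm).le
  rcases le_or_gt 0 C with hC0 | hC0
  · nlinarith [mul_le_mul_of_nonneg_left hup hC0]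
  · nlinarith [norm_nonneg (∑ n ∈ Icc 1 d, unitVec n), pow_pos (two_pos (α := ℝ)) K]

end MixedLorentz

/-- for any `λ > 1` there is a 1-unconditional normalized basis
that is (λ, RPGII) but not RPG. -/
theorem stmt_16 (l : ℝ) (hl : 1 < l) :
    ∃ (X : Type) (_ : NormedAddCommGroup X) (_ : NormedSpace ℝ X)
      (_ : CompleteSpace X) (e : ℕ → X) (f : ℕ → X →L[ℝ] ℝ),
      BasisSystem f e ∧
      (∀ n, ‖e n‖ = 1) ∧
      (∀ (a ε : ℕ → ℝ) (S : Finset ℕ), (∀ n, |ε n| = 1) →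
        ‖∑ n ∈ S, (ε n * a n) • e n‖ ≤ ‖∑ n ∈ S, a n • e n‖) ∧
      (∃ C : ℝ, 1 ≤ C ∧ RPGII f e l C) ∧
      ¬ (∃ C : ℝ, 1 ≤ C ∧ RPG f e C) :=
  ⟨MixedLorentz.Space, inferInstance, inferInstance, inferInstance, MixedLorentz.unitVec,
    MixedLorentz.coord, MixedLorentz.basisSystem, MixedLorentz.norm_unitVec,
    fun _ _ _ => MixedLorentz.norm_sum_smul_unitVec_le, MixedLorentz.rpgII hl,
    fun ⟨C, hC1, hC⟩ => MixedLorentz.not_revConservative C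
      (hC.revConservative MixedLorentz.coord_unitVec (zero_le_one.trans hC1))⟩
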